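/- arXiv:1408.5036 — 6 statements merged into one kernel-verified Lean document; each statement's English description precedes it below -/
import Mathlib

section
/- Let k ≥ 1 and let Π = (π_{ij}) be a k×k matrix with entries in (0,1]. Then Π satisfies (1 − π_{ij})(1 − π_{i'j'}) = (1 − π_{ij'})(1 − π_{i'j}) for all i,j,i',j' ∈ {1,…,k} if and only if there exist ᾱ_1,…,ᾱ_k, β̄_1,…,β̄_k ∈ [0,1] such that 1 − π_{ij} = (1 − ᾱ_i)(1 − β̄_j) for all i,j. -/
/-- Bernoulli fine balance is equivalent to multiplicative decomposability
`1 - π i j = (1 - ᾱ i)(1 - β̄ j)` with `ᾱ i, β̄ j ∈ [0,1]`. -/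
theorem bernoulli_fine_balance_iff_multiplicative
    (k : ℕ) (hk : 1 ≤ k) (P : Fin k → Fin k → ℝ)
    (hmem : ∀ i j, P i j ∈ Set.Ioc (0 : ℝ) 1) :
    (∀ i j i' j', (1 - P i j) * (1 - P i' j') = (1 - P i j') * (1 - P i' j)) ↔
      ∃ a b : Fin k → ℝ,
        (∀ i, a i ∈ Set.Icc (0 : ℝ) 1) ∧ (∀ j, b j ∈ Set.Icc (0 : ℝ) 1) ∧
        ∀ i j, 1 - P i j = (1 - a i) * (1 - b j) := by
  haveI : NeZero k := ⟨by omega⟩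
  constructor
  · intro h
    set q : Fin k → Fin k → ℝ := fun i j => 1 - P i j with hqdef
    have hqnn : ∀ i j, 0 ≤ q i j := fun i j => by
      have := (hmem i j).2; simp only [hqdef]; linarith
    have hqle : ∀ i j, q i j ≤ 1 := fun i j => by
      have := (hmem i j).1; simp only [hqdef]; linarith
    by_cases hall : ∀ i j, P i j = 1
    · refine ⟨fun _ => 1, fun _ => 0, fun _ => ⟨zero_le_one, le_refl 1⟩,
        fun _ => ⟨le_refl 0, zero_le_one⟩, fun i j => by simp [hall i j]⟩
    · push_neg at hall
      obtain ⟨i0, j0, hne⟩ := hall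
      have hq0 : 0 < q i0 j0 := by
        have h2 := (hmem i0 j0).2
        have : P i0 j0 < 1 := lt_of_le_of_ne h2 hne
        simp only [hqdef]; linarith
      set t := Finset.univ.sup' Finset.univ_nonempty (fun i => q i j0) with ht
      have htpos : 0 < t := lt_of_lt_of_le hq0 (Finset.le_sup' (fun i => q i j0) (Finset.mem_univ i0))
      have hkey : ∀ i j, q i j0 * q i0 j = q i j * q i0 j0 := fun i j => h i j0 i0 j
      have hbnd : ∀ j, t * q i0 j ≤ q i0 j0 := by
        intro j
        obtain ⟨i1, -, hi1⟩ := Finset.exists_mem_eq_sup' (Finset.univ_nonempty)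
          (fun i => q i j0)
        rw [ht, hi1]
        calc q i1 j0 * q i0 j = q i1 j * q i0 j0 := hkey i1 j
          _ ≤ 1 * q i0 j0 := by
              apply mul_le_mul_of_nonneg_right (hqle i1 j) (le_of_lt hq0)
          _ = q i0 j0 := one_mul _
      refine ⟨fun i => 1 - q i j0 / t, fun j => 1 - q i0 j * t / q i0 j0, ?_, ?_, ?_⟩
      · intro i
        constructor
        · have : q i j0 ≤ t := Finset.le_sup' (fun i => q i j0) (Finset.mem_univ i)
          have := div_le_one_of_le₀ this (le_of_lt htpos)
          linarith
        · have : 0 ≤ q i j0 / t := div_nonneg (hqnn i j0) (le_of_lt htpos)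
          linarith
      · intro j
        constructor
        · have h1 : q i0 j * t ≤ q i0 j0 := by rw [mul_comm]; exact hbnd j
          have := div_le_one_of_le₀ h1 (le_of_lt hq0)
          linarith
        · have : 0 ≤ q i0 j * t / q i0 j0 :=
            div_nonneg (mul_nonneg (hqnn i0 j) (le_of_lt htpos)) (le_of_lt hq0)
          linarith
      · intro i j
        have hk1 := hkey i j
        have ht' : t ≠ 0 := ne_of_gt htpos
        have hq' : q i0 j0 ≠ 0 := ne_of_gt hq0
        have : (1 : ℝ) - P i j = q i j := rfl
        rw [this]
        field_simp
        linear_combination (-t) * hk1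
  · rintro ⟨a, b, -, -, hab⟩ i j i' j'
    rw [hab i j, hab i' j', hab i j', hab i' j]
    ring
end

section
/- Let π_{11}, π_{12}, π_{21}, π_{22} be nonnegative reals with π_{11} + π_{22} < π_{12} + π_{21}. Then there exist nonnegative reals ᾱ_1, ᾱ_2, β̄_1, β̄_2 such that π_{11} < ᾱ_1 + β̄_1, π_{12} = ᾱ_1 + β̄_2, π_{21} = ᾱ_2 + β̄_1, and π_{22} < ᾱ_2 + β̄_2. Conversely, if such ᾱ_i, β̄_j exist then π_{11} + π_{22} < π_{12} + π_{21}. -/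
/-- 2×2 Poisson case: `π₁₁ + π₂₂ < π₁₂ + π₂₁` iff there are nonnegative
`ᾱ₁, ᾱ₂, β̄₁, β̄₂` with `π₁₁ < ᾱ₁ + β̄₁`, `π₁₂ = ᾱ₁ + β̄₂`, `π₂₁ = ᾱ₂ + β̄₁`,
`π₂₂ < ᾱ₂ + β̄₂`. -/
theorem poisson_two_by_two_strict
    (p11 p12 p21 p22 : ℝ)
    (h11 : 0 ≤ p11) (h12 : 0 ≤ p12) (h21 : 0 ≤ p21) (h22 : 0 ≤ p22) :
    (p11 + p22 < p12 + p21) ↔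
      ∃ a1 a2 b1 b2 : ℝ, 0 ≤ a1 ∧ 0 ≤ a2 ∧ 0 ≤ b1 ∧ 0 ≤ b2 ∧
        p11 < a1 + b1 ∧ p12 = a1 + b2 ∧ p21 = a2 + b1 ∧ p22 < a2 + b2 := by
  constructor
  · intro h
    set S : ℝ := (p11 + p12 + p21 - p22) / 2 with hS
    rcases le_total S p12 with hc | hc
    · refine ⟨S, p21, 0, p12 - S, ?_, ?_, ?_, ?_, ?_, ?_, ?_, ?_⟩ <;> linarith
    · refine ⟨p12, p12 + p21 - S, S - p12, 0, ?_, ?_, ?_, ?_, ?_, ?_, ?_, ?_⟩ <;> linarith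
  · rintro ⟨a1, a2, b1, b2, _, _, _, _, h1, h2, h3, h4⟩
    linarith
end

section
/- Let π_{11}, π_{12}, π_{21}, π_{22} ∈ (0,1] satisfy (1 − π_{11})(1 − π_{22}) > (1 − π_{12})(1 − π_{21}). Then there exist ᾱ_1, ᾱ_2, β̄_1, β̄_2 ∈ [0,1] such that 1 − π_{11} > (1 − ᾱ_1)(1 − β̄_1), 1 − π_{12} = (1 − ᾱ_1)(1 − β̄_2), 1 − π_{21} = (1 − ᾱ_2)(1 − β̄_1), and 1 − π_{22} > (1 − ᾱ_2)(1 − β̄_2). Conversely, the existence of such ᾱ_i, β̄_j implies (1 − π_{11})(1 − π_{22}) > (1 − π_{12})(1 − π_{21}). -/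
/-!
Write `q = 1 - p`, `x = 1 - a`, `y = 1 - b`; the claim is that `q₁₂ q₂₁ < q₁₁ q₂₂` iff `q` is
the product `x yᵀ` off the diagonal and strictly dominates it on the diagonal. The converse is
the computation `q₁₂ q₂₁ = (x₁ y₁)(x₂ y₂) < q₁₁ q₂₂`. For the forward direction, one of
`q₁₂ < q₁₁`, `q₂₁ < q₂₂` holds, and by the symmetry `1 ↔ 2` we may assume the first. Then
`y₁ = 1`, `x₂ = q₂₁` and `x₁ = q₁₂ / s`, `y₂ = s` work for every `s` slightly larger than
`q₁₂ / q₁₁`, because `s = q₁₂ / q₁₁` itself satisfies the remaining strict inequality.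
-/

open Set Filter Topology

lemma mul_lt_mul_of_offDiag_eq_mul {q11 q12 q21 q22 x1 x2 y1 y2 : ℝ}
    (hx1 : 0 ≤ x1) (hy1 : 0 ≤ y1) (hx2 : 0 ≤ x2) (hy2 : 0 ≤ y2)
    (h11 : x1 * y1 < q11) (h12 : q12 = x1 * y2) (h21 : q21 = x2 * y1) (h22 : x2 * y2 < q22) :
    q12 * q21 < q11 * q22 :=
  calc q12 * q21 = (x1 * y1) * (x2 * y2) := by rw [h12, h21]; ring
    _ ≤ (x1 * y1) * q22 := by gcongr
    _ < q11 * q22 := by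
      gcongr
      exact (mul_nonneg hx2 hy2).trans_lt h22

lemma exists_offDiag_eq_mul_of_lt {q11 q12 q21 q22 : ℝ}
    (h11 : q11 ≤ 1) (h12 : 0 ≤ q12) (h21 : q21 ∈ Icc 0 1)
    (hlt : q12 < q11) (h : q12 * q21 < q11 * q22) :
    ∃ x1 x2 y1 y2 : ℝ, x1 ∈ Icc 0 1 ∧ x2 ∈ Icc 0 1 ∧ y1 ∈ Icc 0 1 ∧ y2 ∈ Icc 0 1 ∧
      x1 * y1 < q11 ∧ q12 = x1 * y2 ∧ q21 = x2 * y1 ∧ x2 * y2 < q22 := by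
  have hq11 : 0 < q11 := h12.trans_lt hlt
  set s₀ := q12 / q11
  have hs₀ : s₀ < 1 := (div_lt_one hq11).2 hlt
  have hs₀22 : q21 * s₀ < q22 := by
    rw [mul_div_assoc', div_lt_iff₀ hq11]
    linarith
  have hnear : ∀ᶠ s in 𝓝[>] s₀, s₀ < s ∧ s < 1 ∧ q21 * s < q22 :=
    eventually_mem_nhdsWithin.and <| nhdsWithin_le_nhds <| (eventually_lt_nhds hs₀).and <|
      (continuous_const.mul continuous_id).continuousAt.eventually_lt continuousAt_const hs₀22
  obtain ⟨s, hs₀s, hs1, hs22⟩ := hnear.exists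
  have hs : 0 < s := (div_nonneg h12 hq11.le).trans_lt hs₀s
  have hq12s : q12 < q11 * s := by rwa [div_lt_iff₀' hq11] at hs₀s
  refine ⟨q12 / s, q21, 1, s, ⟨by positivity, ?_⟩, h21, ⟨zero_le_one, le_rfl⟩, ⟨hs.le, hs1.le⟩,
    ?_, (div_mul_cancel₀ q12 hs.ne').symm, (mul_one q21).symm, hs22⟩
  · rw [div_le_one hs]
    exact hq12s.le.trans (mul_le_of_le_one_left hs.le h11)
  · rwa [mul_one, div_lt_iff₀ hs]

lemma exists_offDiag_eq_mul_of_mul_lt_mul {q11 q12 q21 q22 : ℝ}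
    (h11 : q11 ∈ Icc 0 1) (h12 : q12 ∈ Icc 0 1) (h21 : q21 ∈ Icc 0 1) (h22 : q22 ∈ Icc 0 1)
    (h : q12 * q21 < q11 * q22) :
    ∃ x1 x2 y1 y2 : ℝ, x1 ∈ Icc 0 1 ∧ x2 ∈ Icc 0 1 ∧ y1 ∈ Icc 0 1 ∧ y2 ∈ Icc 0 1 ∧
      x1 * y1 < q11 ∧ q12 = x1 * y2 ∧ q21 = x2 * y1 ∧ x2 * y2 < q22 := by
  by_cases hlt : q12 < q11
  · exact exists_offDiag_eq_mul_of_lt h11.2 h12.1 h21 hlt h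
  have hlt' : q21 < q22 := by
    by_contra! hle
    have : q11 * q22 ≤ q12 * q21 := by
      calc q11 * q22 ≤ q11 * q21 := mul_le_mul_of_nonneg_left hle h11.1
        _ ≤ q12 * q21 := mul_le_mul_of_nonneg_right (not_lt.1 hlt) h21.1
    linarith
  obtain ⟨x2, x1, y2, y1, hx2, hx1, hy2, hy1, e22, e21, e12, e11⟩ :=
    exists_offDiag_eq_mul_of_lt (q22 := q11) h22.2 h21.1 h12 hlt' (by linarith)
  exact ⟨x1, x2, y1, y2, hx1, hx2, hy1, hy2, e11, e12, e21, e22⟩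

/-- 2×2 Bernoulli case: `(1-π₁₁)(1-π₂₂) > (1-π₁₂)(1-π₂₁)` iff there are
`ᾱ₁, ᾱ₂, β̄₁, β̄₂ ∈ [0,1]` with `1-π₁₁ > (1-ᾱ₁)(1-β̄₁)`, `1-π₁₂ = (1-ᾱ₁)(1-β̄₂)`,
`1-π₂₁ = (1-ᾱ₂)(1-β̄₁)`, and `1-π₂₂ > (1-ᾱ₂)(1-β̄₂)`. -/
theorem bernoulli_two_by_two_strict
    (p11 p12 p21 p22 : ℝ)
    (h11 : p11 ∈ Set.Ioc (0 : ℝ) 1) (h12 : p12 ∈ Set.Ioc (0 : ℝ) 1)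
    (h21 : p21 ∈ Set.Ioc (0 : ℝ) 1) (h22 : p22 ∈ Set.Ioc (0 : ℝ) 1) :
    ((1 - p11) * (1 - p22) > (1 - p12) * (1 - p21)) ↔
      ∃ a1 a2 b1 b2 : ℝ,
        a1 ∈ Set.Icc (0 : ℝ) 1 ∧ a2 ∈ Set.Icc (0 : ℝ) 1 ∧
        b1 ∈ Set.Icc (0 : ℝ) 1 ∧ b2 ∈ Set.Icc (0 : ℝ) 1 ∧
        1 - p11 > (1 - a1) * (1 - b1) ∧ 1 - p12 = (1 - a1) * (1 - b2) ∧
        1 - p21 = (1 - a2) * (1 - b1) ∧ 1 - p22 > (1 - a2) * (1 - b2) := by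
  have one_sub_mem {p : ℝ} (hp : p ∈ Ioc 0 1) : 1 - p ∈ Icc 0 1 :=
    Icc.one_sub_mem (Ioc_subset_Icc_self hp)
  constructor
  · intro h
    obtain ⟨x1, x2, y1, y2, hx1, hx2, hy1, hy2, e11, e12, e21, e22⟩ :=
      exists_offDiag_eq_mul_of_mul_lt_mul (one_sub_mem h11) (one_sub_mem h12)
        (one_sub_mem h21) (one_sub_mem h22) h
    refine ⟨1 - x1, 1 - x2, 1 - y1, 1 - y2, Icc.one_sub_mem hx1, Icc.one_sub_mem hx2,
      Icc.one_sub_mem hy1, Icc.one_sub_mem hy2, ?_⟩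
    simp only [sub_sub_cancel]
    exact ⟨e11, e12, e21, e22⟩
  · rintro ⟨a1, a2, b1, b2, ha1, ha2, hb1, hb2, e11, e12, e21, e22⟩
    exact mul_lt_mul_of_offDiag_eq_mul (Icc.one_sub_mem ha1).1 (Icc.one_sub_mem hb1).1
      (Icc.one_sub_mem ha2).1 (Icc.one_sub_mem hb2).1 e11 e12 e21 e22
end

section
/- Fix nonnegative integers x'_1,…,x'_k, y'_1,…,y'_k with n' := x'_1 + ⋯ + x'_k = y'_1 + ⋯ + y'_k. Define H(x'_1,…,x'_k; y'_1,…,y'_k) = x'_1 y'_1 / n' if n' ≠ 0 and H = 0 if n' = 0. Then for nonnegative integers c_1,…,c_k with c_i ≤ min(x'_i, y'_i) for each i, the function G(c_1,…,c_k) := H(x'_1 − c_1,…,x'_k − c_k; y'_1 − c_1,…,y'_k − c_k) + c_1 is monotone nondecreasing in each coordinate c_i. -/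
/-!
Write `a = x'₁ - c₁`, `b = y'₁ - c₁` and `n = ∑ (x'ᵢ - cᵢ) = ∑ (y'ᵢ - cᵢ)`, so that `a, b ≤ n` and
`G = ab/n + c₁`, the case `n = 0` being covered by real division by zero. Raising `cᵢ` for `i ≠ 1`
only lowers `n` while keeping `a ≤ n`, so `ab/n` grows. Raising `c₁` by `d` lowers `a`, `b` and `n`
by `d`, and `ab/n ≤ (a-d)(b-d)/(n-d) + d` clears denominators to `d(n-a)(n-b) ≥ 0`.
-/

open Finset Function

lemma mul_div_le_mul_div_of_le_denom {a b n n' : ℝ} (ha : 0 ≤ a) (hb : 0 ≤ b) (han' : a ≤ n')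
    (hn' : n' ≤ n) : a * b / n ≤ a * b / n' := by
  rcases (ha.trans han').eq_or_lt with rfl | hpos
  · obtain rfl : a = 0 := han'.antisymm ha
    simp
  · exact div_le_div_of_nonneg_left (by positivity) hpos hn'

lemma mul_div_le_sub_mul_sub_div_sub_add {a b d n : ℝ} (hd : 0 ≤ d) (hda : d ≤ a)
    (hdb : d ≤ b) (han : a ≤ n) (hbn : b ≤ n) :
    a * b / n ≤ (a - d) * (b - d) / (n - d) + d := by
  rcases (sub_nonneg.2 (hda.trans han)).eq_or_lt with hnd | hnd
  · obtain ⟨rfl, rfl, rfl⟩ : a = n ∧ b = n ∧ d = n := by refine ⟨?_, ?_, ?_⟩ <;> linarith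
    simp [mul_self_div_self]
  · have hn : 0 < n := by linarith
    rw [div_add' _ _ _ hnd.ne', div_le_div_iff₀ hn hnd]
    nlinarith [mul_nonneg (mul_nonneg hd (sub_nonneg.2 han)) (sub_nonneg.2 hbn)]

variable {ι : Type*} [Fintype ι]

lemma sum_natCast_update [DecidableEq ι] (c : ι → ℕ) (i : ι) (m : ℕ) :
    ∑ j, (update c i m j : ℝ) = ∑ j, (c j : ℝ) + (m - c i) := by
  simp_rw [apply_update (fun _ => (Nat.cast : ℕ → ℝ))]
  rw [sum_update_of_mem (mem_univ i), sum_eq_add_sum_sdiff_singleton_of_mem (mem_univ i)]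
  ring

lemma natCast_sum_tsub {x c : ι → ℕ} (hc : ∀ j, c j ≤ x j) :
    ((∑ j, (x j - c j) : ℕ) : ℝ) = ∑ j, (x j : ℝ) - ∑ j, (c j : ℝ) := by
  push_cast [hc]
  exact sum_sub_distrib _ _

lemma sub_le_sum_sub {x c : ι → ℕ} (hc : ∀ j, c j ≤ x j) (i : ι) :
    (x i : ℝ) - c i ≤ ∑ j, (x j : ℝ) - ∑ j, (c j : ℝ) := by
  rw [← sum_sub_distrib]
  exact single_le_sum (f := fun j => (x j : ℝ) - c j)
    (fun j _ => sub_nonneg.2 (Nat.cast_le.2 (hc j))) (mem_univ i)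

lemma ite_natCast_tsub_mul_div_eq (x y c : ι → ℕ) (z : ι) (hc : ∀ j, c j ≤ min (x j) (y j)) :
    (if ∑ j, (x j - c j) = 0 then (0 : ℝ)
      else ((x z - c z : ℕ) : ℝ) * ((y z - c z : ℕ) : ℝ) / ((∑ j, (x j - c j) : ℕ) : ℝ)) =
      ((x z : ℝ) - c z) * ((y z : ℝ) - c z) / (∑ j, (x j : ℝ) - ∑ j, (c j : ℝ)) := by
  have hcx j : c j ≤ x j := (hc j).trans (min_le_left _ _)
  have hcy : c z ≤ y z := (hc z).trans (min_le_right _ _)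
  rw [← natCast_sum_tsub hcx, Nat.cast_sub (hcx z), Nat.cast_sub hcy]
  split_ifs with h
  · rw [h, Nat.cast_zero, div_zero]
  · rfl

/-- Monotonicity of `G(c) = H(x'-c; y'-c) + c₁` in each coordinate, where
`H(x';y') = x'₁ y'₁ / n'` if `n' ≠ 0` and `0` otherwise. -/
theorem encounter_mating_H_monotone
    (k : ℕ) (hk : 1 ≤ k) (x y : Fin k → ℕ)
    (hsum : ∑ i, x i = ∑ i, y i)
    (G : (Fin k → ℕ) → ℝ)
    (hG : ∀ c : Fin k → ℕ, G c =
      (if (∑ i, (x i - c i)) = 0 then (0 : ℝ)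
       else ((x ⟨0, hk⟩ - c ⟨0, hk⟩ : ℕ) : ℝ) * ((y ⟨0, hk⟩ - c ⟨0, hk⟩ : ℕ) : ℝ) /
         ((∑ i, (x i - c i) : ℕ) : ℝ)) + (c ⟨0, hk⟩ : ℝ)) :
    ∀ (c : Fin k → ℕ) (i : Fin k) (m : ℕ),
      (∀ j, c j ≤ min (x j) (y j)) → c i ≤ m → m ≤ min (x i) (y i) →
      G c ≤ G (Function.update c i m) := by
  intro c i m hc hcm hm
  set z : Fin k := ⟨0, hk⟩
  have hc' : ∀ j, update c i m j ≤ min (x j) (y j) :=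
    (forall_update_iff c fun j v => v ≤ min (x j) (y j)).2 ⟨hm, fun j _ => hc j⟩
  have hcx j : c j ≤ x j := (hc j).trans (min_le_left _ _)
  have hcy j : c j ≤ y j := (hc j).trans (min_le_right _ _)
  have hxS := sub_le_sum_sub hcx z
  have hsumR : ∑ j, (x j : ℝ) = ∑ j, (y j : ℝ) := by exact_mod_cast hsum
  have hyS := hsumR ▸ sub_le_sum_sub hcy z
  rw [hG, hG, ite_natCast_tsub_mul_div_eq x y c z hc, ite_natCast_tsub_mul_div_eq x y _ z hc',
    sum_natCast_update]
  have hd : (0 : ℝ) ≤ m - c i := sub_nonneg.2 (Nat.cast_le.2 hcm)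
  rcases eq_or_ne i z with rfl | hiz
  · have hstep := mul_div_le_sub_mul_sub_div_sub_add hd
      (by gcongr; exact hm.trans (min_le_left _ _)) (by gcongr; exact hm.trans (min_le_right _ _))
      hxS hyS
    rw [sub_sub_sub_cancel_right, sub_sub_sub_cancel_right] at hstep
    rw [update_self, ← sub_sub]
    linarith
  · have hxS' := sub_le_sum_sub (fun j => (hc' j).trans (min_le_left _ _)) z
    rw [sum_natCast_update, update_of_ne hiz.symm, ← sub_sub] at hxS'
    rw [update_of_ne hiz.symm, ← sub_sub]
    gcongr ?_ + _
    exact mul_div_le_mul_div_of_le_denom (sub_nonneg.2 (Nat.cast_le.2 (hcx z)))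
      (sub_nonneg.2 (Nat.cast_le.2 (hcy z))) hxS' (sub_le_self _ hd)
end

section
/- With the same setup (H as in the previous statement and x'_1 x'_2 y'_1 y'_2 ≠ 0): the function G(c_1,…,c_k) = H(x'_1 − c_1,…,x'_k − c_k; y'_1 − c_1,…,y'_k − c_k) + c_1 is strictly increasing in c_1 on the range where c_2 < min(x'_2, y'_2), and strictly increasing in c_2 on the range where c_1 < min(x'_1, y'_1). -/
set_option maxHeartbeats 1000000

private lemma chain_lt (f : ℕ → ℝ) (hi : ℕ) (h : ∀ n, n + 1 ≤ hi → f n < f (n + 1)) :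
    ∀ a m, a < m → m ≤ hi → f a < f m := by
  intro a m ham hmhi
  induction m with
  | zero => omega
  | succ n ih =>
    rcases Nat.lt_or_ge a n with h' | h'
    · exact lt_trans (ih h' (by omega)) (h n hmhi)
    · have : a = n := by omega
      subst this; exact h a hmhi

private lemma key1 (a b N : ℕ) (ha : 1 ≤ a) (hb : 1 ≤ b) (haN : a < N) (hbN : b < N) :
    (a : ℝ) * b / N < ((a - 1 : ℕ) : ℝ) * ((b - 1 : ℕ) : ℝ) / ((N - 1 : ℕ) : ℝ) + 1 := by
  have hN : (0:ℝ) < N := by exact_mod_cast (by omega : 0 < N)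
  have hN1 : (0:ℝ) < (N:ℝ) - 1 := by
    have : (1:ℝ) < N := by exact_mod_cast lt_of_le_of_lt ha haN
    linarith
  have haN' : (a:ℝ) < N := by exact_mod_cast haN
  have hbN' : (b:ℝ) < N := by exact_mod_cast hbN
  have ha' : (1:ℝ) ≤ a := by exact_mod_cast ha
  have hb' : (1:ℝ) ≤ b := by exact_mod_cast hb
  rw [Nat.cast_sub ha, Nat.cast_sub hb, Nat.cast_sub (by omega)]
  push_cast
  rw [div_add' _ _ _ (ne_of_gt hN1), div_lt_div_iff₀ hN hN1]
  nlinarith [mul_pos (sub_pos.2 haN') (sub_pos.2 hbN')]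

private lemma key2 (a b N : ℕ) (ha : 1 ≤ a) (hb : 1 ≤ b) (hN2 : 2 ≤ N) :
    (a : ℝ) * b / N < (a : ℝ) * b / ((N - 1 : ℕ) : ℝ) := by
  have hab : (0:ℝ) < (a:ℝ) * b := by
    have h1 : (0:ℝ) < a := by exact_mod_cast ha
    have h2 : (0:ℝ) < b := by exact_mod_cast hb
    positivity
  apply div_lt_div_of_pos_left hab
  · exact_mod_cast (by omega : 0 < N - 1)
  · exact_mod_cast (by omega : N - 1 < N)

/-- Strict monotonicity of `G(c) = H(x'-c; y'-c) + c₁` in `c₁` (resp. `c₂`)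
when `c₂ < min(x'₂, y'₂)` (resp. `c₁ < min(x'₁, y'₁)`), given
`x'₁ x'₂ y'₁ y'₂ ≠ 0`. Here `H(x';y') = x'₁ y'₁ / n'` if `n' ≠ 0`, else `0`. -/
theorem encounter_mating_H_strict_monotone
    (k : ℕ) (hk : 2 ≤ k) (x y : Fin k → ℕ)
    (hsum : ∑ i, x i = ∑ i, y i)
    (hx1 : 0 < x ⟨0, by omega⟩) (hx2 : 0 < x ⟨1, hk⟩)
    (hy1 : 0 < y ⟨0, by omega⟩) (hy2 : 0 < y ⟨1, hk⟩)
    (G : (Fin k → ℕ) → ℝ)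
    (hG : ∀ c : Fin k → ℕ, G c =
      (if (∑ i, (x i - c i)) = 0 then (0 : ℝ)
       else ((x ⟨0, by omega⟩ - c ⟨0, by omega⟩ : ℕ) : ℝ) *
            ((y ⟨0, by omega⟩ - c ⟨0, by omega⟩ : ℕ) : ℝ) /
         ((∑ i, (x i - c i) : ℕ) : ℝ)) + (c ⟨0, by omega⟩ : ℝ)) :
    (∀ (c : Fin k → ℕ) (m : ℕ),
      (∀ j, c j ≤ min (x j) (y j)) →
      c ⟨1, hk⟩ < min (x ⟨1, hk⟩) (y ⟨1, hk⟩) →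
      c ⟨0, by omega⟩ < m → m ≤ min (x ⟨0, by omega⟩) (y ⟨0, by omega⟩) →
      G c < G (Function.update c ⟨0, by omega⟩ m)) ∧
    (∀ (c : Fin k → ℕ) (m : ℕ),
      (∀ j, c j ≤ min (x j) (y j)) →
      c ⟨0, by omega⟩ < min (x ⟨0, by omega⟩) (y ⟨0, by omega⟩) →
      c ⟨1, hk⟩ < m → m ≤ min (x ⟨1, hk⟩) (y ⟨1, hk⟩) →
      G c < G (Function.update c ⟨1, hk⟩ m)) := by
  set i0 : Fin k := ⟨0, by omega⟩ with hi0
  set i1 : Fin k := ⟨1, hk⟩ with hi1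
  have hne : i0 ≠ i1 := by simp [hi0, hi1, Fin.ext_iff]
  -- sum of (x - c) as a difference, and equality with the y-version
  have hsubx : ∀ c : Fin k → ℕ, (∀ j, c j ≤ min (x j) (y j)) →
      (∑ i, (x i - c i)) = (∑ i, x i) - (∑ i, c i) := by
    intro c hc
    rw [eq_tsub_iff_add_eq_of_le (Finset.sum_le_sum fun i _ => le_trans (hc i) (min_le_left _ _))]
    rw [← Finset.sum_add_distrib]
    exact Finset.sum_congr rfl fun i _ => by
      have := le_trans (hc i) (min_le_left (x i) (y i)); omega
  have hsuby : ∀ c : Fin k → ℕ, (∀ j, c j ≤ min (x j) (y j)) →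
      (∑ i, (y i - c i)) = (∑ i, y i) - (∑ i, c i) := by
    intro c hc
    rw [eq_tsub_iff_add_eq_of_le (Finset.sum_le_sum fun i _ => le_trans (hc i) (min_le_right _ _))]
    rw [← Finset.sum_add_distrib]
    exact Finset.sum_congr rfl fun i _ => by
      have := le_trans (hc i) (min_le_right (x i) (y i)); omega
  have hxy : ∀ c : Fin k → ℕ, (∀ j, c j ≤ min (x j) (y j)) →
      (∑ i, (x i - c i)) = (∑ i, (y i - c i)) := by
    intro c hc; rw [hsubx c hc, hsuby c hc, hsum]
  -- lower bound from the pair {i0, i1}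
  have hpairx : ∀ c : Fin k → ℕ,
      (x i0 - c i0) + (x i1 - c i1) ≤ ∑ i, (x i - c i) := by
    intro c
    have := Finset.sum_le_sum_of_subset (f := fun i => x i - c i)
      (Finset.subset_univ ({i0, i1} : Finset (Fin k)))
    rwa [Finset.sum_pair hne] at this
  have hpairy : ∀ c : Fin k → ℕ,
      (y i0 - c i0) + (y i1 - c i1) ≤ ∑ i, (y i - c i) := by
    intro c
    have := Finset.sum_le_sum_of_subset (f := fun i => y i - c i)
      (Finset.subset_univ ({i0, i1} : Finset (Fin k)))
    rwa [Finset.sum_pair hne] at this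
  -- sum after updating one coordinate to +1
  have hupd : ∀ (c : Fin k → ℕ) (j : Fin k),
      (∑ i, Function.update c j (c j + 1) i) = (∑ i, c i) + 1 := by
    intro c j
    rw [Finset.sum_update_of_mem (Finset.mem_univ j)]
    have h2 := Finset.add_sum_erase Finset.univ c (Finset.mem_univ j)
    simp only [Finset.sdiff_singleton_eq_erase] at *
    omega
  -- single steps
  have step1 : ∀ c : Fin k → ℕ, (∀ j, c j ≤ min (x j) (y j)) →
      c i1 < min (x i1) (y i1) → c i0 + 1 ≤ min (x i0) (y i0) →
      G c < G (Function.update c i0 (c i0 + 1)) := by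
    intro c hc hc1 hc0
    set a := x i0 - c i0 with ha
    set b := y i0 - c i0 with hb
    set N := ∑ i, (x i - c i) with hN
    have ha1 : 1 ≤ a := by have := hc0; omega
    have hb1 : 1 ≤ b := by have := hc0; omega
    have haN : a < N := by
      have h := hpairx c
      rw [← hN, ← ha] at h
      omega
    have hbN : b < N := by
      have h := hpairy c
      rw [← hxy c hc, ← hN] at h
      rw [← hb] at h
      omega
    -- the updated function
    set c' := Function.update c i0 (c i0 + 1) with hc'
    have hc'0 : c' i0 = c i0 + 1 := Function.update_self _ _ _
    have hc'valid : ∀ j, c' j ≤ min (x j) (y j) := by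
      intro j
      by_cases hj : j = i0
      · subst hj; rw [hc'0]; exact hc0
      · rw [hc', Function.update_of_ne hj]; exact hc j
    have hN' : (∑ i, (x i - c' i)) = N - 1 := by
      rw [hsubx c' hc'valid, hc', hupd, hN, hsubx c hc]
      have hle : (∑ i, c i) ≤ ∑ i, x i :=
        Finset.sum_le_sum fun i _ => le_trans (hc i) (min_le_left _ _)
      have hlt : (∑ i, c i) < ∑ i, x i := by
        have := hsubx c hc
        omega
      omega
    have hax' : x i0 - c' i0 = a - 1 := by rw [hc'0]; omega
    have hay' : y i0 - c' i0 = b - 1 := by rw [hc'0]; omega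
    rw [hG c, hG c']
    rw [hN', hax', hay', hc'0]
    rw [← hN]
    rw [if_neg (by omega), if_neg (by omega)]
    have := key1 a b N ha1 hb1 haN hbN
    push_cast
    linarith
  have step2 : ∀ c : Fin k → ℕ, (∀ j, c j ≤ min (x j) (y j)) →
      c i0 < min (x i0) (y i0) → c i1 + 1 ≤ min (x i1) (y i1) →
      G c < G (Function.update c i1 (c i1 + 1)) := by
    intro c hc hc0 hc1
    set a := x i0 - c i0 with ha
    set b := y i0 - c i0 with hb
    set N := ∑ i, (x i - c i) with hN
    have ha1 : 1 ≤ a := by omega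
    have hb1 : 1 ≤ b := by omega
    have hN2 : 2 ≤ N := by
      have h := hpairx c
      rw [← hN, ← ha] at h
      omega
    set c' := Function.update c i1 (c i1 + 1) with hc'
    have hc'0 : c' i0 = c i0 := Function.update_of_ne hne _ _
    have hc'valid : ∀ j, c' j ≤ min (x j) (y j) := by
      intro j
      by_cases hj : j = i1
      · subst hj; rw [hc', Function.update_self]; exact hc1
      · rw [hc', Function.update_of_ne hj]; exact hc j
    have hN' : (∑ i, (x i - c' i)) = N - 1 := by
      rw [hsubx c' hc'valid, hc', hupd, hN, hsubx c hc]
      have hlt : (∑ i, c i) < ∑ i, x i := by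
        have := hsubx c hc
        omega
      omega
    rw [hG c, hG c']
    rw [hN', hc'0, ← hN, ← ha, ← hb]
    rw [if_neg (by omega), if_neg (by omega)]
    have := key2 a b N ha1 hb1 hN2
    linarith
  constructor
  · intro c m hc hc1 hcm hm
    have hfix : Function.update c i0 (c i0) = c := Function.update_eq_self _ _
    have := chain_lt (fun n => G (Function.update c i0 n)) (min (x i0) (y i0))
      (fun n hn => by
        have hval : ∀ j, Function.update c i0 n j ≤ min (x j) (y j) := by
          intro j
          by_cases hj : j = i0
          · subst hj; rw [Function.update_self]; omega
          · rw [Function.update_of_ne hj]; exact hc j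
        have h1 : (Function.update c i0 n) i1 < min (x i1) (y i1) := by
          rw [Function.update_of_ne (Ne.symm hne)]; exact hc1
        have h0 : (Function.update c i0 n) i0 + 1 ≤ min (x i0) (y i0) := by
          rw [Function.update_self]; omega
        have := step1 (Function.update c i0 n) hval h1 h0
        simpa [Function.update_idem, Function.update_self] using this)
      (c i0) m hcm hm
    have h2 : G (Function.update c i0 (c i0)) < G (Function.update c i0 m) := this
    rw [hfix] at h2
    exact h2
  · intro c m hc hc0 hcm hm
    have hfix : Function.update c i1 (c i1) = c := Function.update_eq_self _ _
    have := chain_lt (fun n => G (Function.update c i1 n)) (min (x i1) (y i1))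
      (fun n hn => by
        have hval : ∀ j, Function.update c i1 n j ≤ min (x j) (y j) := by
          intro j
          by_cases hj : j = i1
          · subst hj; rw [Function.update_self]; omega
          · rw [Function.update_of_ne hj]; exact hc j
        have h0 : (Function.update c i1 n) i0 < min (x i0) (y i0) := by
          rw [Function.update_of_ne hne]; exact hc0
        have h1 : (Function.update c i1 n) i1 + 1 ≤ min (x i1) (y i1) := by
          rw [Function.update_self]; omega
        have := step2 (Function.update c i1 n) hval h0 h1
        simpa [Function.update_idem, Function.update_self] using this)
      (c i1) m hcm hm
    have h2 : G (Function.update c i1 (c i1)) < G (Function.update c i1 m) := this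
    rw [hfix] at h2
    exact h2
end

section
/- Suppose p_{ij} = c for some constant c ∈ (0,1) and all i,j ∈ {1,…,k}, and let π_{ij} = c(α_i + β_j − α_i β_j) = c[1 − (1 − α_i)(1 − β_j)] with α_i, β_j ∈ [0,1] and α_i + β_j > 0. Then Π = (π_{ij}) satisfies the Bernoulli fine balance condition (1 − π_{ij})(1 − π_{i'j'}) = (1 − π_{ij'})(1 − π_{i'j}) for all i,j,i',j' if and only if (α_i − α_{i'})(β_j − β_{j'}) = 0 for all i,i',j,j'; equivalently, if and only if α_1 = ⋯ = α_k or β_1 = ⋯ = β_k. -/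
/-- Uniform preferences `p i j = c ∈ (0,1)` with Bernoulli firing times:
fine balance holds iff `(α i - α i')(β j - β j') = 0` for all indices, iff
the `α`'s are all equal or the `β`'s are all equal. -/
theorem uniform_preferences_bernoulli_fine_balance
    (k : ℕ) (hk : 1 ≤ k) (c : ℝ) (hc0 : 0 < c) (hc1 : c < 1)
    (α β : Fin k → ℝ)
    (hα : ∀ i, α i ∈ Set.Icc (0 : ℝ) 1) (hβ : ∀ j, β j ∈ Set.Icc (0 : ℝ) 1)
    (hpos : ∀ i j, 0 < α i + β j)
    (P : Fin k → Fin k → ℝ)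
    (hP : ∀ i j, P i j = c * (α i + β j - α i * β j)) :
    ((∀ i j i' j',
        (1 - P i j) * (1 - P i' j') = (1 - P i j') * (1 - P i' j)) ↔
      (∀ i i' j j', (α i - α i') * (β j - β j') = 0)) ∧
    ((∀ i j i' j',
        (1 - P i j) * (1 - P i' j') = (1 - P i j') * (1 - P i' j)) ↔
      ((∀ i i', α i = α i') ∨ (∀ j j', β j = β j'))) := by
  have key : ∀ i j i' j' : Fin k,
      (1 - P i j) * (1 - P i' j') - (1 - P i j') * (1 - P i' j)
        = c * (1 - c) * ((α i - α i') * (β j - β j')) := by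
    intro i j i' j'
    rw [hP, hP, hP, hP]; ring
  have hcne : c * (1 - c) ≠ 0 :=
    mul_ne_zero (ne_of_gt hc0) (by linarith)
  have h1 : (∀ i j i' j',
      (1 - P i j) * (1 - P i' j') = (1 - P i j') * (1 - P i' j)) ↔
      (∀ i i' j j', (α i - α i') * (β j - β j') = 0) := by
    constructor
    · intro h i i' j j'
      have h3 : c * (1 - c) * ((α i - α i') * (β j - β j')) = 0 := by
        linarith [key i j i' j', h i j i' j']
      exact (mul_eq_zero.mp h3).resolve_left hcne
    · intro h i j i' j'
      have h2 := key i j i' j'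
      rw [h i i' j j', mul_zero] at h2
      linarith
  refine ⟨h1, h1.trans ?_⟩
  constructor
  · intro h
    by_cases hA : ∀ i i', α i = α i'
    · exact Or.inl hA
    · push_neg at hA
      obtain ⟨i, i', hii⟩ := hA
      refine Or.inr fun j j' => ?_
      have h2 := h i i' j j'
      have h3 : α i - α i' ≠ 0 := sub_ne_zero.mpr hii
      have := (mul_eq_zero.mp h2).resolve_left h3
      linarith
  · rintro (h | h) i i' j j'
    · rw [h i i', sub_self, zero_mul]
    · rw [h j j', sub_self, mul_zero]
end
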